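/- arXiv:2502.20109 — 2 statements merged into one kernel-verified Lean document; each statement's English description precedes it below -/
import Mathlib

section
/- Let q, a, x ∈ ℂ with 0 < |q| < 1, x ≠ 0, and 1 - a q^j x ≠ 0 for all 0 ≤ j ≤ n. Then for every n ≥ 1, the n-th iterate of the q-differential operator applied to the function t ↦ 1/(1 - a t), evaluated at x, equals (q;q)_n · a^n / (a x;q)_{n+1}. -/
/-- The finite q-shifted factorial (a;q)_n = ∏_{j=0}^{n-1} (1 - a q^j). -/
noncomputable def qPoch (q a : ℂ) (n : ℕ) : ℂ :=
  ∏ j ∈ Finset.range n, (1 - a * q ^ j)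

/-- The q-differential operator: (D_q f)(x) = (f(x) - f(qx))/x. -/
noncomputable def Dq (q : ℂ) (f : ℂ → ℂ) : ℂ → ℂ :=
  fun x => (f x - f (q * x)) / x

/-!
Induction on `n`, for all `x` at once since `D_q` also evaluates at `q x`. Writing `P = (a q x; q)_n`, one has `(a x; q)_{n+1} = (1 - a x) P` and
`(a q x; q)_{n+1} = P (1 - a q^{n+1} x)`, so applying `D_q` to the formula for `n` gives
`(q;q)_n aⁿ / P · ((1 - a q^{n+1} x) - (1 - a x)) / (x (1 - a x)(1 - a q^{n+1} x))`,
and the bracket is `a x (1 - q^{n+1})`, which supplies the extra factors of `(q;q)_{n+1} a^{n+1}`.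
-/

lemma qPoch_succ (q a : ℂ) (n : ℕ) : qPoch q a (n + 1) = qPoch q a n * (1 - a * q ^ n) :=
  Finset.prod_range_succ _ _

lemma qPoch_succ' (q a : ℂ) (n : ℕ) : qPoch q a (n + 1) = (1 - a) * qPoch q (a * q) n := by
  rw [qPoch, Finset.prod_range_succ', pow_zero, mul_one, mul_comm]
  congr 1
  exact Finset.prod_congr rfl fun j _ => by ring

lemma qPoch_ne_zero_iff (q a : ℂ) (n : ℕ) :
    qPoch q a n ≠ 0 ↔ ∀ j < n, 1 - a * q ^ j ≠ 0 := by
  simp [qPoch, Finset.prod_ne_zero_iff]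

theorem iterate_Dq_one_div_one_sub_mul {q : ℂ} (hq : q ≠ 0) (a : ℂ) (n : ℕ) {x : ℂ}
    (hx : x ≠ 0) (hne : qPoch q (a * x) (n + 1) ≠ 0) :
    (Dq q)^[n] (fun t => 1 / (1 - a * t)) x =
      qPoch q q n * a ^ n / qPoch q (a * x) (n + 1) := by
  induction n generalizing x with
  | zero => simp [qPoch]
  | succ n ih =>
    set P := qPoch q (a * x * q) n
    have hfactor : qPoch q (a * x) (n + 2) = (1 - a * x) * P * (1 - a * x * q * q ^ n) := by
      rw [qPoch_succ', qPoch_succ, ← mul_assoc]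
    rw [hfactor] at hne
    have hlow : qPoch q (a * x) (n + 1) = (1 - a * x) * P := qPoch_succ' ..
    have hhigh : qPoch q (a * (q * x)) (n + 1) = P * (1 - a * x * q * q ^ n) := by
      rw [show a * (q * x) = a * x * q by ring, qPoch_succ]
    have h0 : 1 - a * x ≠ 0 := left_ne_zero_of_mul (left_ne_zero_of_mul hne)
    have hP0 : P ≠ 0 := right_ne_zero_of_mul (left_ne_zero_of_mul hne)
    have hlast : 1 - a * x * q * q ^ n ≠ 0 := right_ne_zero_of_mul hne
    rw [Function.iterate_succ_apply', Dq, ih hx (by rw [hlow]; exact mul_ne_zero h0 hP0),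
      ih (mul_ne_zero hq hx) (by rw [hhigh]; exact mul_ne_zero hP0 hlast),
      hlow, hhigh, hfactor, qPoch_succ q q]
    field_simp
    ring

theorem stmt0_general (q a x : ℂ) (hq0 : 0 < ‖q‖)
    (hx : x ≠ 0) (n : ℕ)
    (h : ∀ j : ℕ, j ≤ n → 1 - a * q ^ j * x ≠ 0) :
    (Dq q)^[n] (fun t => 1 / (1 - a * t)) x =
      qPoch q q n * a ^ n / qPoch q (a * x) (n + 1) := by
  refine iterate_Dq_one_div_one_sub_mul (norm_pos_iff.mp hq0) a n hx ?_
  rw [qPoch_ne_zero_iff]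
  intro j hj
  rw [mul_right_comm]
  exact h j (Nat.lt_succ_iff.mp hj)

theorem stmt0 (q a x : ℂ) (hq0 : 0 < ‖q‖) (hq1 : ‖q‖ < 1)
    (hx : x ≠ 0) (n : ℕ) (hn : 1 ≤ n)
    (h : ∀ j : ℕ, j ≤ n → 1 - a * q ^ j * x ≠ 0) :
    (Dq q)^[n] (fun t => 1 / (1 - a * t)) x =
      qPoch q q n * a ^ n / qPoch q (a * x) (n + 1) :=
  stmt0_general q a x hq0 hx n h
end

section
/- Let r, s be positive integers with r ≤ s + 1, let k ≥ 1 be an integer, let u, z ∈ ℂ with |u| ≤ 1 and |z| < 1, let a_1, …, a_r ∈ ℂ, and let c_1, …, c_s ∈ ℂ with c_1 ≠ 0 and 1 - c_i q^j ≠ 0 for all 1 ≤ i ≤ s and all j ≥ 0. Then the k-th q-derivative with respect to c_1 of the function c_1 ↦ rΦs(a_1,…,a_r; c_1, c_2,…,c_s; q, u, z) equals ((-1)^{1+s-r} ∏_{i=1}^{r}(1-a_i) · (q;q)_k · z) / ((c_1;q)_{k+1} (1-q) ∏_{i=2}^{s}(1-c_i)) times the deformed series (r+1)Φ(s+1)(a_1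 q, …, a_r q, q^{k+1}; c_1 q^{k+1}, c_2 q, …, c_s q, q^2; q, u, q^{1+s-r} u z). -/
/-- The deformed basic hypergeometric series
rΦs(a₁,…,a_r; b₁,…,b_s; q, u, z)
  = ∑_{n≥0} u^{C(n,2)} (∏ᵢ (aᵢ;q)_n) / ((q;q)_n ∏ᵢ (bᵢ;q)_n)
      ((-1)^n q^{C(n,2)})^{1+s-r} z^n. -/
noncomputable def dPhi (q u z : ℂ) {r s : ℕ} (a : Fin r → ℂ) (b : Fin s → ℂ) : ℂ :=
  ∑' n : ℕ,
    u ^ (n.choose 2) * (∏ i, qPoch q (a i) n) / (qPoch q q n * ∏ i, qPoch q (b i) n) *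
      ((-1) ^ n * q ^ (n.choose 2)) ^ (1 + s - r) * z ^ n

/-! Writing the series as `∑ Tₙ / (c₁;q)ₙ` with `Tₙ` independent of `c₁`, the identity
`D_q (c ↦ 1/(c;q)ₘ) = (1 - qᵐ)/(c;q)ₘ₊₁` applied termwise gives
`D_qᵏ = ∑ Tₙ (qⁿ;q)ₖ / (c₁;q)ₙ₊ₖ`. The term `n = 0` vanishes because `(1;q)ₖ = 0`; shifting
`n ↦ n + 1` and splitting off the first factor of every q-shifted factorial turns the rest into
the stated multiple of the new series. Termwise differentiation is legitimate because `(a;q)ₙ`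
converges to `(a;q)_∞`, which is nonzero when no factor vanishes, so all terms are `O(|z|ⁿ)`. -/

open Filter Topology Finset

lemma one_sub_mul_pow_ne_zero {a q : ℂ} (ha : ‖a‖ < 1) (hq : ‖q‖ ≤ 1) (j : ℕ) :
    1 - a * q ^ j ≠ 0 := by
  refine sub_ne_zero.2 fun h => ?_
  have : ‖a * q ^ j‖ < 1 := by
    rw [norm_mul, norm_pow]
    exact mul_lt_one_of_nonneg_of_lt_one_left (norm_nonneg a) ha (pow_le_one₀ (norm_nonneg q) hq)
  simp [← h] at this

lemma summable_norm_neg_mul_pow {q : ℂ} (hq : ‖q‖ < 1) (a : ℂ) :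
    Summable fun j : ℕ => ‖-(a * q ^ j)‖ := by
  simpa only [norm_neg, norm_mul, norm_pow] using
    (summable_geometric_of_lt_one (norm_nonneg q) hq).mul_left ‖a‖

namespace qPoch

variable {q : ℂ}

@[simp] lemma zero_right (a : ℂ) : qPoch q a 0 = 1 := rfl

@[simp] lemma zero_left (n : ℕ) : qPoch q 0 n = 1 := by simp [qPoch]

lemma succ (a : ℂ) (n : ℕ) : qPoch q a (n + 1) = qPoch q a n * (1 - a * q ^ n) :=
  prod_range_succ _ n

lemma succ' (a : ℂ) (n : ℕ) : qPoch q a (n + 1) = (1 - a) * qPoch q (a * q) n := by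
  simp only [qPoch, prod_range_succ', pow_zero, mul_one, mul_assoc, ← pow_succ']
  ring

lemma add (a : ℂ) (m n : ℕ) : qPoch q a (m + n) = qPoch q a m * qPoch q (a * q ^ m) n := by
  simp only [qPoch, prod_range_add, mul_assoc, ← pow_add]

lemma self_mul_pow_succ (m k : ℕ) :
    qPoch q q m * qPoch q (q ^ (m + 1)) k = qPoch q q k * qPoch q (q ^ (k + 1)) m := by
  rw [pow_succ', pow_succ', ← add, ← add, add_comm]

lemma one_left_eq_zero {k : ℕ} (hk : 0 < k) : qPoch q 1 k = 0 := by
  obtain ⟨m, rfl⟩ := Nat.exists_eq_add_of_lt hk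
  simp [succ']

lemma ne_zero {a : ℂ} (h : ∀ j, 1 - a * q ^ j ≠ 0) (n : ℕ) : qPoch q a n ≠ 0 :=
  prod_ne_zero_iff.2 fun j _ => h j

lemma norm_le_two_pow {a : ℂ} (ha : ‖a‖ ≤ 1) (hq : ‖q‖ ≤ 1) (n : ℕ) :
    ‖qPoch q a n‖ ≤ 2 ^ n := by
  have hfactor (j : ℕ) : ‖1 - a * q ^ j‖ ≤ 2 :=
    calc ‖1 - a * q ^ j‖ ≤ ‖(1 : ℂ)‖ + ‖a‖ * ‖q‖ ^ j := by
          simpa only [norm_mul, norm_pow] using norm_sub_le (1 : ℂ) (a * q ^ j)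
      _ ≤ 1 + 1 * 1 := by gcongr; exacts [norm_one.le, pow_le_one₀ (norm_nonneg q) hq]
      _ = 2 := by norm_num
  calc ‖qPoch q a n‖ ≤ ∏ j ∈ range n, ‖1 - a * q ^ j‖ := Finset.norm_prod_le _ _
    _ ≤ ∏ _j ∈ range n, (2 : ℝ) := prod_le_prod (fun _ _ => norm_nonneg _) fun j _ => hfactor j
    _ = 2 ^ n := by simp

lemma tendsto_tprod (hq : ‖q‖ < 1) (a : ℂ) :
    Tendsto (qPoch q a) atTop (𝓝 (∏' j : ℕ, (1 - a * q ^ j))) := by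
  have h := multipliable_one_add_of_summable (f := fun j : ℕ => -(a * q ^ j))
    (summable_norm_neg_mul_pow hq a)
  simp only [← sub_eq_add_neg] at h
  exact h.tendsto_prod_tprod_nat

lemma tprod_ne_zero (hq : ‖q‖ < 1) {a : ℂ} (ha : ∀ j, 1 - a * q ^ j ≠ 0) :
    ∏' j : ℕ, (1 - a * q ^ j) ≠ 0 := by
  have h := tprod_one_add_ne_zero_of_summable (f := fun j : ℕ => -(a * q ^ j))
    (by simpa only [← sub_eq_add_neg] using ha)
    (summable_norm_neg_mul_pow hq a)
  simpa only [← sub_eq_add_neg] using h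

end qPoch

noncomputable def dPhiTerm (q u z : ℂ) {r s : ℕ} (a : Fin r → ℂ) (b : Fin s → ℂ) (n : ℕ) : ℂ :=
  u ^ (n.choose 2) * (∏ i, qPoch q (a i) n) / (qPoch q q n * ∏ i, qPoch q (b i) n) *
    ((-1) ^ n * q ^ (n.choose 2)) ^ (1 + s - r) * z ^ n

lemma dPhi_eq_tsum (q u z : ℂ) {r s : ℕ} (a : Fin r → ℂ) (b : Fin s → ℂ) :
    dPhi q u z a b = ∑' n, dPhiTerm q u z a b n := rfl

section bounds

variable {q u z : ℂ} {r s : ℕ} (a : Fin r → ℂ) {b : Fin s → ℂ}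

lemma exists_norm_qPoch_ratio_le (hq : ‖q‖ < 1) (hb : ∀ i j, 1 - b i * q ^ j ≠ 0) :
    ∃ C, ∀ n, ‖(∏ i, qPoch q (a i) n) / (qPoch q q n * ∏ i, qPoch q (b i) n)‖ ≤ C := by
  have hlim := (tendsto_finsetProd univ fun i _ => qPoch.tendsto_tprod hq (a i)).div
    ((qPoch.tendsto_tprod hq q).mul
      (tendsto_finsetProd univ fun i _ => qPoch.tendsto_tprod hq (b i)))
    (mul_ne_zero (qPoch.tprod_ne_zero hq (one_sub_mul_pow_ne_zero hq hq.le))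
      (prod_ne_zero_iff.2 fun i _ => qPoch.tprod_ne_zero hq (hb i)))
  obtain ⟨C, hC⟩ := hlim.norm.bddAbove_range
  exact ⟨C, fun n => hC ⟨n, rfl⟩⟩

lemma summable_norm_dPhiTerm (hq : ‖q‖ < 1) (hu : ‖u‖ ≤ 1) (hz : ‖z‖ < 1)
    (hb : ∀ i j, 1 - b i * q ^ j ≠ 0) : Summable fun n => ‖dPhiTerm q u z a b n‖ := by
  obtain ⟨C, hC⟩ := exists_norm_qPoch_ratio_le a hq hb
  refine .of_nonneg_of_le (fun _ => norm_nonneg _) (fun n => ?_)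
    ((summable_geometric_of_lt_one (norm_nonneg z) hz).mul_left C)
  have hsign : ‖((-1 : ℂ) ^ n * q ^ n.choose 2) ^ (1 + s - r)‖ ≤ 1 := by
    rw [norm_pow, norm_mul, norm_pow, norm_neg, norm_one, one_pow, one_mul, norm_pow]
    exact pow_le_one₀ (by positivity) (pow_le_one₀ (norm_nonneg q) hq.le)
  rw [dPhiTerm, mul_div_assoc, norm_mul, norm_mul, norm_mul, norm_pow u, norm_pow z]
  calc ‖u‖ ^ n.choose 2 * ‖(∏ i, qPoch q (a i) n) / (qPoch q q n * ∏ i, qPoch q (b i) n)‖ *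
        ‖((-1 : ℂ) ^ n * q ^ n.choose 2) ^ (1 + s - r)‖ * ‖z‖ ^ n
      ≤ 1 * C * 1 * ‖z‖ ^ n := by
        gcongr
        · linarith [(norm_nonneg _).trans (hC 0)]
        · exact pow_le_one₀ (norm_nonneg u) hu
        · exact hC n
    _ = C * ‖z‖ ^ n := by ring

end bounds

section iterate

variable {q : ℂ}

lemma Dq_inv_qPoch {x : ℂ} (hx : x ≠ 0) {m : ℕ} (h : qPoch q x (m + 1) ≠ 0) :
    Dq q (fun t => (qPoch q t m)⁻¹) x = (1 - q ^ m) / qPoch q x (m + 1) := by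
  have hright := qPoch.succ (q := q) x m
  have hleft : qPoch q x (m + 1) = (1 - x) * qPoch q (q * x) m := by rw [qPoch.succ', mul_comm x q]
  have h1 : qPoch q x m ≠ 0 := left_ne_zero_of_mul (hright ▸ h)
  have h2 : qPoch q (q * x) m ≠ 0 := right_ne_zero_of_mul (hleft ▸ h)
  have h3 : 1 - x ≠ 0 := left_ne_zero_of_mul (hleft ▸ h)
  simp only [Dq]
  field_simp
  linear_combination qPoch q (q * x) m * hright - qPoch q x m * hleft

lemma summable_mul_qPoch_div_qPoch (hq : ‖q‖ < 1) {T : ℕ → ℂ} (hT : Summable fun n => ‖T n‖)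
    (k : ℕ) {x : ℂ} (hx : ∀ j, 1 - x * q ^ j ≠ 0) :
    Summable fun n => T n * qPoch q (q ^ n) k / qPoch q x (n + k) := by
  obtain ⟨B, hB⟩ :=
    ((qPoch.tendsto_tprod hq x).inv₀ (qPoch.tprod_ne_zero hq hx)).norm.bddAbove_range
  refine .of_norm_bounded (hT.mul_right (2 ^ k * B)) fun n => ?_
  rw [div_eq_mul_inv, norm_mul, norm_mul, mul_assoc]
  gcongr
  · exact qPoch.norm_le_two_pow (by simpa using pow_le_one₀ (norm_nonneg q) hq.le) hq.le k
  · exact hB ⟨n + k, rfl⟩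

lemma iterate_Dq_tsum_div_qPoch (hq0 : q ≠ 0) (hq : ‖q‖ < 1) {T : ℕ → ℂ}
    (hT : Summable fun n => ‖T n‖) (k : ℕ) {x : ℂ} (hx0 : x ≠ 0) (hx : ∀ j, 1 - x * q ^ j ≠ 0) :
    (Dq q)^[k] (fun t => ∑' n, T n / qPoch q t n) x =
      ∑' n, T n * qPoch q (q ^ n) k / qPoch q x (n + k) := by
  induction k generalizing x with
  | zero => simp
  | succ k ih =>
    have hqx : ∀ j, 1 - q * x * q ^ j ≠ 0 := fun j => by
      simpa [pow_succ, mul_comm, mul_left_comm, mul_assoc] using hx (j + 1)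
    rw [Function.iterate_succ_apply', Dq, ih hx0 hx, ih (mul_ne_zero hq0 hx0) hqx,
      ← (summable_mul_qPoch_div_qPoch hq hT k hx).tsum_sub
        (summable_mul_qPoch_div_qPoch hq hT k hqx), ← tsum_div_const]
    refine tsum_congr fun n => ?_
    calc (T n * qPoch q (q ^ n) k / qPoch q x (n + k) -
          T n * qPoch q (q ^ n) k / qPoch q (q * x) (n + k)) / x
        = T n * qPoch q (q ^ n) k * Dq q (fun t => (qPoch q t (n + k))⁻¹) x := by
          simp only [Dq]; ring
      _ = T n * qPoch q (q ^ n) (k + 1) / qPoch q x (n + (k + 1)) := by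
          rw [Dq_inv_qPoch hx0 (qPoch.ne_zero hx _), qPoch.succ (q ^ n) k, ← add_assoc, pow_add]
          ring

end iterate

section shift

variable {q : ℂ}

lemma prod_qPoch_succ {ι : Type*} (s : Finset ι) (f : ι → ℂ) (m : ℕ) :
    ∏ i ∈ s, qPoch q (f i) (m + 1) = (∏ i ∈ s, (1 - f i)) * ∏ i ∈ s, qPoch q (f i * q) m := by
  simp only [qPoch.succ', prod_mul_distrib]

lemma prod_qPoch_update {s : ℕ} (b : Fin s → ℂ) (i₀ : Fin s) (t : ℂ) (n : ℕ) :
    ∏ i, qPoch q (Function.update b i₀ t i) n =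
      qPoch q t n * ∏ i ∈ univ.erase i₀, qPoch q (b i) n := by
  rw [← mul_prod_erase univ _ (mem_univ i₀), Function.update_self]
  congr 1
  exact prod_congr rfl fun i hi => by rw [Function.update_of_ne (ne_of_mem_erase hi)]

lemma prod_qPoch_snoc {n : ℕ} (f : Fin n → ℂ) (y : ℂ) (m : ℕ) :
    ∏ i, qPoch q (Fin.snoc (α := fun _ => ℂ) f y i) m = (∏ i, qPoch q (f i) m) * qPoch q y m := by
  simp [Fin.prod_univ_castSucc]

variable {u z : ℂ} {r s : ℕ} (a : Fin r → ℂ) (b : Fin s → ℂ) (i₀ : Fin s)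

-- As `(0;q)ₙ = 1`, setting `b i₀ = 0` removes that parameter from the term.
lemma dPhiTerm_update (t : ℂ) (n : ℕ) :
    dPhiTerm q u z a (Function.update b i₀ t) n =
      dPhiTerm q u z a (Function.update b i₀ 0) n / qPoch q t n := by
  simp only [dPhiTerm, prod_qPoch_update, qPoch.zero_left, one_mul]
  ring

lemma dPhiTerm_succ_mul_qPoch_div (x : ℂ) {m : ℕ} (hm : qPoch q q m ≠ 0) (k : ℕ) :
    dPhiTerm q u z a (Function.update b i₀ 0) (m + 1) * qPoch q (q ^ (m + 1)) k /
        qPoch q x (m + 1 + k) =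
      (-1) ^ (1 + s - r) * (∏ i, (1 - a i)) * qPoch q q k * z /
          (qPoch q x (k + 1) * (1 - q) * ∏ i ∈ univ.erase i₀, (1 - b i)) *
        dPhiTerm q u (q ^ (1 + s - r) * u * z) (Fin.snoc (fun i => a i * q) (q ^ (k + 1)))
          (Fin.snoc (Function.update (fun i => b i * q) i₀ (x * q ^ (k + 1))) (q ^ 2)) m := by
  have hpow : qPoch q (q ^ (m + 1)) k = qPoch q q k * qPoch q (q ^ (k + 1)) m / qPoch q q m := by
    rw [← qPoch.self_mul_pow_succ, mul_div_cancel_left₀ _ hm]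
  have hx : qPoch q x (m + 1 + k) = qPoch q x (k + 1) * qPoch q (x * q ^ (k + 1)) m := by
    rw [show m + 1 + k = k + 1 + m by omega, qPoch.add]
  have hself : qPoch q q (m + 1) = (1 - q) * qPoch q (q ^ 2) m := by rw [qPoch.succ', sq]
  have hchoose : (m + 1).choose 2 = m.choose 2 + m := by
    rw [Nat.choose_succ_succ', Nat.choose_one_right, add_comm]
  have hexp : 1 + (s + 1) - (r + 1) = 1 + s - r := by omega
  simp only [dPhiTerm, prod_qPoch_snoc, prod_qPoch_update, qPoch.zero_left, one_mul]
  simp only [prod_qPoch_succ, hpow, hx, hself, hchoose, hexp, div_eq_mul_inv, mul_inv]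
  ring

end shift

theorem stmt7_general (q u z : ℂ) (hq0 : 0 < ‖q‖) (hq1 : ‖q‖ < 1)
    (hu : ‖u‖ ≤ 1) (hz : ‖z‖ < 1)
    (r s : ℕ) (hs : 0 < s)
    (k : ℕ) (hk : 1 ≤ k)
    (a : Fin r → ℂ) (c : Fin s → ℂ)
    (hc1 : c ⟨0, hs⟩ ≠ 0)
    (hc : ∀ (i : Fin s) (j : ℕ), 1 - c i * q ^ j ≠ 0) :
    (Dq q)^[k] (fun t => dPhi q u z a (Function.update c ⟨0, hs⟩ t)) (c ⟨0, hs⟩) =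
      (-1 : ℂ) ^ (1 + s - r) * (∏ i, (1 - a i)) * qPoch q q k * z /
          (qPoch q (c ⟨0, hs⟩) (k + 1) * (1 - q) *
            ∏ i ∈ Finset.univ.erase (⟨0, hs⟩ : Fin s), (1 - c i)) *
        dPhi q u (q ^ (1 + s - r) * u * z)
          (Fin.snoc (fun i => a i * q) (q ^ (k + 1)))
          (Fin.snoc
            (Function.update (fun i : Fin s => c i * q) ⟨0, hs⟩
              (c ⟨0, hs⟩ * q ^ (k + 1)))
            (q ^ 2)) := by
  set i₀ : Fin s := ⟨0, hs⟩
  set T := dPhiTerm q u z a (Function.update c i₀ 0)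
  have hT : Summable fun n => ‖T n‖ := by
    refine summable_norm_dPhiTerm a hq1 hu hz fun i j => ?_
    rcases eq_or_ne i i₀ with rfl | hi
    · simp
    · simpa [Function.update_of_ne hi] using hc i j
  have hseries : (fun t => dPhi q u z a (Function.update c i₀ t)) =
      fun t => ∑' n, T n / qPoch q t n :=
    funext fun t => tsum_congr fun n => dPhiTerm_update a c i₀ t n
  rw [hseries, iterate_Dq_tsum_div_qPoch (norm_pos_iff.1 hq0) hq1 hT k hc1 (hc i₀),
    (summable_mul_qPoch_div_qPoch hq1 hT k (hc i₀)).tsum_eq_zero_add, pow_zero,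
    qPoch.one_left_eq_zero hk, mul_zero, zero_div, zero_add, dPhi_eq_tsum, ← tsum_mul_left]
  exact tsum_congr fun m => dPhiTerm_succ_mul_qPoch_div a c i₀ _
    (qPoch.ne_zero (one_sub_mul_pow_ne_zero hq1 hq1.le) m) k

theorem stmt7 (q u z : ℂ) (hq0 : 0 < ‖q‖) (hq1 : ‖q‖ < 1)
    (hu : ‖u‖ ≤ 1) (hz : ‖z‖ < 1)
    (r s : ℕ) (hr : 1 ≤ r) (hs : 0 < s) (hrs : r ≤ s + 1)
    (k : ℕ) (hk : 1 ≤ k)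
    (a : Fin r → ℂ) (c : Fin s → ℂ)
    (hc1 : c ⟨0, hs⟩ ≠ 0)
    (hc : ∀ (i : Fin s) (j : ℕ), 1 - c i * q ^ j ≠ 0) :
    (Dq q)^[k] (fun t => dPhi q u z a (Function.update c ⟨0, hs⟩ t)) (c ⟨0, hs⟩) =
      (-1 : ℂ) ^ (1 + s - r) * (∏ i, (1 - a i)) * qPoch q q k * z /
          (qPoch q (c ⟨0, hs⟩) (k + 1) * (1 - q) *
            ∏ i ∈ Finset.univ.erase (⟨0, hs⟩ : Fin s), (1 - c i)) *
        dPhi q u (q ^ (1 + s - r) * u * z)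
          (Fin.snoc (fun i => a i * q) (q ^ (k + 1)))
          (Fin.snoc
            (Function.update (fun i : Fin s => c i * q) ⟨0, hs⟩
              (c ⟨0, hs⟩ * q ^ (k + 1)))
            (q ^ 2)) :=
  stmt7_general q u z hq0 hq1 hu hz r s hs k hk a c hc1 hc
end
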